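/- arXiv:2004.05022 — 3 statements merged into one kernel-verified Lean document; each statement's English description precedes it below -/
import Mathlib

section
/- Every connected P5-free graph G has a dominating set D such that the subgraph induced by D is either a path on 3 vertices or a complete graph. -/
/-!
Take an inclusion-minimal connected dominating set `D`. For `d ∈ D`, minimality yields a neighbour
`z` of `d` adjacent to nothing in a prescribed component of `G[D \ {d}]`: a private neighbour of `d`
if `D \ {d}` is connected (otherwise `D \ {d}` would be a smaller connected dominating set), and a
vertex of another component otherwise. Attaching such a `z` to an induced `P₄` of `G[D]` gives an
induced `P₅`, so `G[D]` is `P₄`-free and has diameter at most two. If `G[D]` is not complete it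
contains an induced path `x - b - y`; any further vertex `w ∈ D`, together with such a neighbour of
`w` and private neighbours of `x` and `y`, again yields an induced `P₅`, so `D = {x, b, y}`.
-/

namespace SimpleGraph

variable {V : Type*} {G : SimpleGraph V}

def IsDominating (G : SimpleGraph V) (D : Set V) : Prop :=
  ∀ v, v ∈ D ∨ ∃ u ∈ D, G.Adj u v

def IsConnectedDominating (G : SimpleGraph V) (D : Set V) : Prop :=
  (G.induce D).Connected ∧ G.IsDominating D

theorem isConnectedDominating_univ (hG : G.Connected) : G.IsConnectedDominating Set.univ :=
  ⟨G.induceUnivIso.connected_iff.2 hG, fun _ => Or.inl trivial⟩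

theorem nonempty_pathGraph_five_embedding {a b c d e : V}
    (hab : G.Adj a b) (hbc : G.Adj b c) (hcd : G.Adj c d) (hde : G.Adj d e)
    (hac : ¬ G.Adj a c) (had : ¬ G.Adj a d) (hae : ¬ G.Adj a e)
    (hbd : ¬ G.Adj b d) (hbe : ¬ G.Adj b e) (hce : ¬ G.Adj c e) :
    Nonempty (pathGraph 5 ↪g G) := by
  have hadj : ∀ i j, G.Adj (![a, b, c, d, e] i) (![a, b, c, d, e] j) ↔ (pathGraph 5).Adj i j := by
    intro i j
    fin_cases i <;> fin_cases j <;> simp [pathGraph_adj, G.adj_comm, *]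
  refine ⟨⟨⟨![a, b, c, d, e], fun i j hij => ?_⟩, hadj _ _⟩⟩
  fin_cases i <;> fin_cases j <;> simp at hij ⊢ <;> subst hij <;> simp_all [G.adj_comm]

theorem nonempty_induce_iso_pathGraph_three {x b y : V} (hxb : G.Adj x b) (hby : G.Adj b y)
    (hxy : ¬ G.Adj x y) (hne : x ≠ y) :
    Nonempty (G.induce {x, b, y} ≃g pathGraph 3) := by
  have hadj : ∀ i j, G.Adj (![x, b, y] i) (![x, b, y] j) ↔ (pathGraph 3).Adj i j := by
    intro i j
    fin_cases i <;> fin_cases j <;> simp [pathGraph_adj, G.adj_comm, *]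
  let f : pathGraph 3 ↪g G := ⟨⟨![x, b, y], fun i j hij => by
      fin_cases i <;> fin_cases j <;> simp at hij ⊢ <;> subst hij <;> simp_all [G.adj_comm]⟩,
    hadj _ _⟩
  have hrange : Set.range f = {x, b, y} := by
    change Set.range ![x, b, y] = _
    simp only [Matrix.range_cons, Matrix.range_empty, Set.union_empty, Set.singleton_union]
  exact ⟨hrange ▸ f.isoInduceRange.symm⟩

theorem exists_adj_of_induce_connected {D T : Set V} (hD : (G.induce D).Connected) {u v : V}
    (hu : u ∈ D) (huT : u ∉ T) (hv : v ∈ D) (hvT : v ∈ T) :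
    ∃ x ∈ D, x ∈ T ∧ ∃ y ∈ D, y ∉ T ∧ G.Adj x y := by
  obtain ⟨p⟩ := hD.preconnected ⟨v, hv⟩ ⟨u, hu⟩
  obtain ⟨⟨⟨x, y⟩, hxy⟩, -, hx, hy⟩ := p.exists_boundary_dart {w | w.1 ∈ T} hvT huT
  exact ⟨x, x.2, hx, y, y.2, hy, hxy⟩

section Minimal

variable {D : Set V}

theorem exists_private_neighbor (hD : Minimal G.IsConnectedDominating D) {d : V} (hd : d ∈ D)
    (hconn : (G.induce (D \ {d})).Connected) :
    ∃ p, G.Adj d p ∧ ∀ w ∈ D, w ≠ d → ¬ G.Adj w p := by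
  obtain ⟨⟨a, ha⟩⟩ := hconn.nonempty
  have hndom : ¬ G.IsDominating (D \ {d}) := fun hdom =>
    hD.not_prop_of_lt (Set.sdiff_singleton_ssubset.2 hd) ⟨hconn, hdom⟩
  simp only [IsDominating, not_forall, not_or, not_exists, not_and] at hndom
  obtain ⟨p, hpD, hp⟩ := hndom
  obtain ⟨d', -, hd', t, htD, htd, hdt⟩ :=
    exists_adj_of_induce_connected (T := {d}) hD.prop.1 ha.1 ha.2 hd rfl
  have hpd : p ≠ d := by
    rintro rfl
    exact hp t ⟨htD, htd⟩ (hd' ▸ hdt).symm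
  obtain hpD' | ⟨u, huD, hup⟩ := hD.prop.2 p
  · exact absurd ⟨hpD', hpd⟩ hpD
  obtain rfl : u = d := by_contra fun hud => hp u ⟨huD, hud⟩ hup
  exact ⟨p, hup, fun w hw hwd => hp w ⟨hw, hwd⟩⟩

theorem exists_adj_forall_reachable_not_adj (hD : Minimal G.IsConnectedDominating D) {d a : V}
    (hd : d ∈ D) (ha : a ∈ D \ {d}) :
    ∃ z, G.Adj d z ∧ ∀ w (hw : w ∈ D \ {d}),
      (G.induce (D \ {d})).Reachable ⟨a, ha⟩ ⟨w, hw⟩ → ¬ G.Adj z w := by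
  by_cases hconn : (G.induce (D \ {d})).Connected
  · obtain ⟨p, hdp, hp⟩ := exists_private_neighbor hD hd hconn
    exact ⟨p, hdp, fun w hw _ hpw => hp w hw.1 hw.2 hpw.symm⟩
  obtain ⟨u, hu, hau⟩ :
      ∃ u, ∃ hu : u ∈ D \ {d}, ¬ (G.induce (D \ {d})).Reachable ⟨a, ha⟩ ⟨u, hu⟩ := by
    by_contra! h
    exact hconn ((connected_iff _).2 ⟨fun u v => (h u u.2).symm.trans (h v v.2), ⟨⟨a, ha⟩⟩⟩)
  -- an edge of `G[D]` leaving `T` cannot start in the component of `a`, so it starts at `d`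
  let T := insert d {w | ∃ hw : w ∈ D \ {d}, (G.induce (D \ {d})).Reachable ⟨a, ha⟩ ⟨w, hw⟩}
  obtain ⟨x, hxD, hxT, z, hzD, hzT, hxz⟩ :=
    exists_adj_of_induce_connected (T := T) hD.prop.1 hu.1
      (by rintro (h | ⟨_, h⟩); exacts [hu.2 h, hau h]) hd (Set.mem_insert d _)
  simp only [T, Set.mem_insert_iff, Set.mem_ofPred_eq, not_or, not_exists] at hxT hzT
  have hz : z ∈ D \ {d} := ⟨hzD, hzT.1⟩
  obtain hxd | ⟨hx, hax⟩ := hxT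
  · refine ⟨z, hxd ▸ hxz, fun w hw haw hzw => hzT.2 hz (haw.trans ?_)⟩
    exact Adj.reachable (G := G.induce (D \ {d})) hzw.symm
  · have hxz' : (G.induce (D \ {d})).Adj ⟨x, hx⟩ ⟨z, hz⟩ := hxz
    exact (hzT.2 hz (hax.trans hxz'.reachable)).elim

theorem false_of_induced_path_four (hD : Minimal G.IsConnectedDominating D)
    (hP5 : ¬ Nonempty (pathGraph 5 ↪g G)) {x a b c : V} (hx : x ∈ D) (ha : a ∈ D) (hb : b ∈ D)
    (hc : c ∈ D) (hxa : G.Adj x a) (hab : G.Adj a b) (hbc : G.Adj b c) (hxb : ¬ G.Adj x b)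
    (hxc : ¬ G.Adj x c) (hac : ¬ G.Adj a c) : False := by
  have ha' : a ∈ D \ {x} := ⟨ha, hxa.ne'⟩
  have hb' : b ∈ D \ {x} := ⟨hb, by rintro rfl; exact hxc hbc⟩
  have hc' : c ∈ D \ {x} := ⟨hc, by rintro rfl; exact hxb hbc.symm⟩
  obtain ⟨z, hxz, hz⟩ := exists_adj_forall_reachable_not_adj hD hx ha'
  have hab' : (G.induce (D \ {x})).Reachable ⟨a, ha'⟩ ⟨b, hb'⟩ := Adj.reachable hab
  have hbc' : (G.induce (D \ {x})).Reachable ⟨b, hb'⟩ ⟨c, hc'⟩ := Adj.reachable hbc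
  exact hP5 (nonempty_pathGraph_five_embedding hxz.symm hxa hab hbc (hz a ha' .rfl)
    (hz b hb' hab') (hz c hc' (hab'.trans hbc')) hxb hxc hac)

theorem exists_common_neighbor (hD : Minimal G.IsConnectedDominating D)
    (hP5 : ¬ Nonempty (pathGraph 5 ↪g G)) {x y : V} (hx : x ∈ D) (hy : y ∈ D) (hne : x ≠ y)
    (hxy : ¬ G.Adj x y) : ∃ b ∈ D, G.Adj x b ∧ G.Adj b y := by
  suffices h : ∀ w v : D, (G.induce D).Walk w v →
      w = v ∨ G.Adj w v ∨ ∃ b ∈ D, G.Adj w b ∧ G.Adj b v by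
    simpa [hne, hxy] using h ⟨x, hx⟩ ⟨y, hy⟩ (hD.prop.1.preconnected _ _).some
  intro w v p
  induction p with
  | nil => exact Or.inl rfl
  | @cons w t v hwt _ ih =>
    by_contra! hw
    obtain rfl | htv | ⟨m, hm, htm, hmv⟩ := ih
    · exact hw.2.1 hwt
    · exact hw.2.2 t t.2 hwt htv
    · exact false_of_induced_path_four hD hP5 w.2 t.2 hm v.2 hwt htm hmv
        (fun hwm => hw.2.2 m hm hwm hmv) hw.2.1 (hw.2.2 t t.2 hwt)

theorem connected_induce_diff_singleton (hD : Minimal G.IsConnectedDominating D)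
    (hP5 : ¬ Nonempty (pathGraph 5 ↪g G)) {d x : V} (hx : x ∈ D) (hne : d ≠ x)
    (hdx : ¬ G.Adj d x) : (G.induce (D \ {d})).Connected := by
  have hx' : x ∈ D \ {d} := ⟨hx, hne.symm⟩
  have hreach : ∀ u : ↥(D \ {d}), (G.induce (D \ {d})).Reachable u ⟨x, hx'⟩ := by
    rintro ⟨u, hu⟩
    by_cases hux : u = x
    · subst hux; rfl
    by_cases hadj : G.Adj u x
    · exact Adj.reachable hadj
    obtain ⟨m, hm, hum, hmx⟩ := exists_common_neighbor hD hP5 hu.1 hx hux hadj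
    have hm' : m ∈ D \ {d} := ⟨hm, by rintro rfl; exact hdx hmx⟩
    have hum' : (G.induce (D \ {d})).Adj ⟨u, hu⟩ ⟨m, hm'⟩ := hum
    exact hum'.reachable.trans (Adj.reachable hmx)
  exact (connected_iff _).2 ⟨fun u v => (hreach u).trans (hreach v).symm, ⟨⟨x, hx'⟩⟩⟩

theorem subset_of_induced_path_three (hD : Minimal G.IsConnectedDominating D)
    (hP5 : ¬ Nonempty (pathGraph 5 ↪g G)) {x b y : V} (hx : x ∈ D) (hb : b ∈ D) (hy : y ∈ D)
    (hxb : G.Adj x b) (hby : G.Adj b y) (hxy : ¬ G.Adj x y) (hne : x ≠ y) : D ⊆ {x, b, y} := by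
  obtain ⟨p, hxp, hp⟩ :=
    exists_private_neighbor hD hx (connected_induce_diff_singleton hD hP5 hy hne hxy)
  obtain ⟨q, hyq, hq⟩ := exists_private_neighbor hD hy
    (connected_induce_diff_singleton hD hP5 hx hne.symm fun h => hxy h.symm)
  have hpb : ¬ G.Adj p b := fun h => hp b hb hxb.ne' h.symm
  have hpy : ¬ G.Adj p y := fun h => hp y hy hne.symm h.symm
  have hqb : ¬ G.Adj q b := fun h => hq b hb hby.ne h.symm
  have hqx : ¬ G.Adj q x := fun h => hq x hx hne h.symm
  have hpq : G.Adj p q := by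
    by_contra hpq
    exact hP5 (nonempty_pathGraph_five_embedding hxp.symm hxb hby hyq hpb hpy hpq hxy
      (fun h => hqx h.symm) (fun h => hqb h.symm))
  intro w hw
  by_contra hw'
  simp only [Set.mem_insert_iff, Set.mem_singleton_iff, not_or] at hw'
  obtain ⟨hwx, hwb, hwy⟩ := hw'
  have hx' : x ∈ D \ {w} := ⟨hx, Ne.symm hwx⟩
  have hb' : b ∈ D \ {w} := ⟨hb, Ne.symm hwb⟩
  have hy' : y ∈ D \ {w} := ⟨hy, Ne.symm hwy⟩
  have hbx : (G.induce (D \ {w})).Reachable ⟨b, hb'⟩ ⟨x, hx'⟩ := Adj.reachable hxb.symm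
  obtain ⟨z, hwz, hz⟩ := exists_adj_forall_reachable_not_adj hD hw hb'
  have hzx : ¬ G.Adj z x := hz x hx' hbx
  have hzb : ¬ G.Adj z b := hz b hb' .rfl
  have hzy : ¬ G.Adj z y := hz y hy' (Adj.reachable hby)
  have hwp : ¬ G.Adj w p := hp w hw hwx
  have hwq : ¬ G.Adj w q := hq w hw hwy
  by_cases hzp : G.Adj z p
  · exact hP5 (nonempty_pathGraph_five_embedding hzp hxp.symm hxb hby hzx hzb hzy hpb hpy hxy)
  by_cases hzq : G.Adj z q
  · exact hP5 (nonempty_pathGraph_five_embedding hzq hyq.symm hby.symm hxb.symm hzy hzb hzx hqb hqx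
      fun h => hxy h.symm)
  by_cases hwx' : G.Adj w x
  · exact hP5 (nonempty_pathGraph_five_embedding hwz.symm hwx' hxp hpq hzx hzp hzq hwp hwq
      (fun h => hqx h.symm))
  by_cases hwy' : G.Adj w y
  · exact hP5 (nonempty_pathGraph_five_embedding hwz.symm hwy' hyq hpq.symm hzy hzq hzp hwq hwp
      (fun h => hpy h.symm))
  obtain ⟨c, hc, hwc, hcx⟩ := exists_common_neighbor hD hP5 hw hx hwx hwx'
  have hc' : c ∈ D \ {w} := ⟨hc, hwc.ne'⟩
  have hzc : ¬ G.Adj z c := hz c hc' (hbx.trans (Adj.reachable hcx.symm))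
  exact hP5 (nonempty_pathGraph_five_embedding hwz.symm hwc hcx hxp hzc hzx hzp hwx' hwp
    (hp c hc hcx.ne))

end Minimal

end SimpleGraph

open SimpleGraph

theorem stmt_1 {V : Type} [Fintype V] (G : SimpleGraph V)
    (hconn : G.Connected)
    (hP5free : ¬ Nonempty (SimpleGraph.pathGraph 5 ↪g G)) :
    ∃ D : Set V,
      (∀ v : V, v ∈ D ∨ ∃ u ∈ D, G.Adj u v) ∧
      (Nonempty ((G.induce D) ≃g SimpleGraph.pathGraph 3) ∨
        (∀ u v : D, u ≠ v → (G.induce D).Adj u v)) := by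
  obtain ⟨D, -, hD⟩ := exists_minimal_le_of_wellFoundedLT G.IsConnectedDominating Set.univ
    (isConnectedDominating_univ hconn)
  refine ⟨D, hD.prop.2, ?_⟩
  by_cases hclique : ∀ u v : D, u ≠ v → (G.induce D).Adj u v
  · exact Or.inr hclique
  push Not at hclique
  obtain ⟨⟨x, hx⟩, ⟨y, hy⟩, hne, hxy⟩ := hclique
  rw [ne_eq, Subtype.mk.injEq] at hne
  obtain ⟨b, hb, hxb, hby⟩ := exists_common_neighbor hD hP5free hx hy hne hxy
  have hD3 : D = {x, b, y} :=
    (subset_of_induced_path_three hD hP5free hx hb hy hxb hby hxy hne).antisymm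
      (Set.insert_subset hx (Set.insert_subset hb (Set.singleton_subset_iff.2 hy)))
  exact Or.inl (hD3 ▸ nonempty_induce_iso_pathGraph_three hxb hby hxy hne)
end

section
/- For every integer s ≥ 1, if G is an (sP1 + P5)-free graph that contains an induced P5, then G contains a dominating induced subgraph isomorphic to rP1 + P5 for some r < s. -/
/-!
Take an induced copy of `rP₁ + P₅` with `r` as large as possible: it exists because `G` contains
an induced `P₅ = 0P₁ + P₅`, and `r < s` because `G` is `(sP₁ + P₅)`-free. A vertex outside the copy
with no neighbour in it could be added as a further isolated vertex, contradicting maximality; so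
the copy is dominating.
-/

/-- The disjoint union of `s` isolated vertices and a path on 5 vertices. -/
def sP1P5 (s : ℕ) : SimpleGraph (Fin s ⊕ Fin 5) where
  Adj x y := match x, y with
    | Sum.inr u, Sum.inr v => (SimpleGraph.pathGraph 5).Adj u v
    | _, _ => False
  symm := ⟨by rintro (u | u) (v | v) h <;> first | exact (h : (SimpleGraph.pathGraph 5).Adj u v).symm | simp_all⟩
  loopless := ⟨by rintro (u | u) h <;> simp_all⟩

theorem Nat.exists_lt_and_not_succ {P : ℕ → Prop} {s : ℕ} (h0 : P 0) (hs : ¬ P s) :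
    ∃ r < s, P r ∧ ¬ P (r + 1) := by
  by_contra! hstep
  have hle : ∀ n ≤ s, P n := by
    intro n
    induction n with
    | zero => exact fun _ => h0
    | succ n ih => exact fun hn => hstep n (by omega) (ih (by omega))
  exact hs (hle s le_rfl)

open SimpleGraph

namespace sP1P5

@[simp] lemma not_adj_inl_left {s : ℕ} (i : Fin s) (x : Fin s ⊕ Fin 5) :
    ¬ (sP1P5 s).Adj (.inl i) x := id

@[simp] lemma not_adj_inl_right {s : ℕ} (i : Fin s) (x : Fin s ⊕ Fin 5) :
    ¬ (sP1P5 s).Adj x (.inl i) := by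
  cases x <;> exact id

@[simp] lemma adj_inr_inr {s : ℕ} (u v : Fin 5) :
    (sP1P5 s).Adj (.inr u) (.inr v) ↔ (pathGraph 5).Adj u v := .rfl

def embeddingPathGraphOfZero : sP1P5 0 ↪g pathGraph 5 where
  toFun := Sum.elim Fin.elim0 id
  inj' := by rintro (i | u) (j | v) h <;> first | exact i.elim0 | exact j.elim0 | simpa using h
  map_rel_iff' := by rintro (i | u) (j | v) <;> first | exact i.elim0 | exact j.elim0 | rfl

variable {V : Type} {G : SimpleGraph V} {r : ℕ}

def consIsolated (f : sP1P5 r ↪g G) (v : V) (hv : v ∉ Set.range f)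
    (hadj : ∀ x, ¬ G.Adj (f x) v) : sP1P5 (r + 1) ↪g G where
  toFun := Sum.elim (Fin.cons v (f ∘ .inl)) (f ∘ .inr)
  inj' := by
    have hne : ∀ x, f x ≠ v := fun x h => hv ⟨x, h⟩
    rintro (i | u) (j | w) h
    all_goals try cases i using Fin.cases
    all_goals try cases j using Fin.cases
    all_goals simp_all [(hne _).symm]
  map_rel_iff' {x y} := by
    change G.Adj (Sum.elim _ _ x) (Sum.elim _ _ y) ↔ _
    rcases x with i | u <;> rcases y with j | w
    all_goals try cases i using Fin.cases
    all_goals try cases j using Fin.cases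
    all_goals simp [hadj, G.adj_comm v]

lemma range_dominating_of_not_embedding_succ (f : sP1P5 r ↪g G)
    (hmax : ¬ Nonempty (sP1P5 (r + 1) ↪g G)) (v : V) :
    v ∈ Set.range f ∨ ∃ u ∈ Set.range f, G.Adj u v := by
  by_contra! hv
  exact hmax ⟨consIsolated f v hv.1 fun x => hv.2 (f x) ⟨x, rfl⟩⟩

end sP1P5

theorem stmt_2_general {V : Type} (G : SimpleGraph V) (s : ℕ)
    (hfree : ¬ Nonempty (sP1P5 s ↪g G))
    (hP5 : Nonempty (SimpleGraph.pathGraph 5 ↪g G)) :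
    ∃ r < s, ∃ D : Set V,
      (∀ v : V, v ∈ D ∨ ∃ u ∈ D, G.Adj u v) ∧
      Nonempty ((G.induce D) ≃g sP1P5 r) := by
  obtain ⟨r, hrs, ⟨f⟩, hmax⟩ := Nat.exists_lt_and_not_succ (P := fun r => Nonempty (sP1P5 r ↪g G))
    (hP5.map (·.comp sP1P5.embeddingPathGraphOfZero)) hfree
  exact ⟨r, hrs, Set.range f, sP1P5.range_dominating_of_not_embedding_succ f hmax,
    ⟨f.isoInduceRange.symm⟩⟩

theorem stmt_2 {V : Type} [Fintype V] (G : SimpleGraph V) (s : ℕ) (hs : 1 ≤ s)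
    (hfree : ¬ Nonempty (sP1P5 s ↪g G))
    (hP5 : Nonempty (SimpleGraph.pathGraph 5 ↪g G)) :
    ∃ r < s, ∃ D : Set V,
      (∀ v : V, v ∈ D ∨ ∃ u ∈ D, G.Adj u v) ∧
      Nonempty ((G.induce D) ≃g sP1P5 r) :=
  stmt_2_general G s hfree hP5
end

section
/- For all positive integers p and q there exists an integer R(p,q) such that every graph on at least R(p,q) vertices contains a clique of size p or an independent set of size q. -/
open Finset

private lemma ramsey_aux : ∀ n p q : ℕ, p + q ≤ n →
    ∃ R : ℕ, ∀ (V : Type) (_ : Fintype V) (G : SimpleGraph V),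
      R ≤ Fintype.card V →
        (∃ s : Finset V, G.IsNClique p s) ∨
        (∃ s : Finset V, s.card = q ∧ ∀ u ∈ s, ∀ v ∈ s, u ≠ v → ¬ G.Adj u v) := by
  intro n
  induction n with
  | zero =>
    intro p q h
    refine ⟨0, fun V _ G _ => ?_⟩
    obtain ⟨rfl, rfl⟩ : p = 0 ∧ q = 0 := by omega
    exact Or.inl ⟨∅, by simp [SimpleGraph.isNClique_iff]⟩
  | succ n ih =>
    intro p q h
    match p, q with
    | 0, q => exact ⟨0, fun V _ G _ => Or.inl ⟨∅, by simp [SimpleGraph.isNClique_iff]⟩⟩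
    | p, 0 => exact ⟨0, fun V _ G _ => Or.inr ⟨∅, by simp⟩⟩
    | p + 1, q + 1 =>
      obtain ⟨R₁, hR₁⟩ := ih p (q + 1) (by omega)
      obtain ⟨R₂, hR₂⟩ := ih (p + 1) q (by omega)
      refine ⟨R₁ + R₂ + 1, fun V _ G hcard => ?_⟩
      classical
      have hV : 0 < Fintype.card V := by omega
      obtain ⟨v⟩ := Fintype.card_pos_iff.mp hV
      let N : Finset V := G.neighborFinset v
      let M : Finset V := Nᶜ \ {v}
      have hN : N = G.neighborFinset v := rfl
      have hM : M = Nᶜ \ {v} := rfl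
      have hvN : v ∉ N := by simp [hN]
      have hvNc : v ∈ Nᶜ := by simpa using hvN
      have hMcard : M.card = Nᶜ.card - 1 := by
        rw [hM, Finset.card_sdiff_of_subset (by simpa using hvNc)]
        simp
      have hNc : Nᶜ.card = Fintype.card V - N.card := Finset.card_compl N
      have hsum : R₁ ≤ N.card ∨ R₂ ≤ M.card := by
        by_contra hc
        push_neg at hc
        have h1 : N.card ≤ Fintype.card V := Finset.card_le_univ N
        omega
      cases hsum with
      | inl hle =>
        -- apply to the neighborhood
        have := hR₁ ↥(N : Finset V) inferInstance (G.comap Subtype.val)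
          (by rwa [Fintype.card_coe])
        cases this with
        | inl hcl =>
          obtain ⟨s, hs⟩ := hcl
          refine Or.inl ⟨insert v (s.image Subtype.val), ?_⟩
          have hinj : Function.Injective (Subtype.val : ↥(N : Finset V) → V) :=
            Subtype.val_injective
          have himg : G.IsNClique p (s.image Subtype.val) := by
            constructor
            · intro a ha b hb hab
              simp only [Finset.coe_image, Set.mem_image, Finset.mem_coe] at ha hb
              obtain ⟨a', ha', rfl⟩ := ha
              obtain ⟨b', hb', rfl⟩ := hb
              exact hs.1 ha' hb' (fun hh => hab (by rw [hh]))
            · rw [Finset.card_image_of_injective _ hinj, hs.2]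
          refine himg.insert ?_
          intro b hb
          simp only [Finset.mem_image] at hb
          obtain ⟨b', _, rfl⟩ := hb
          exact (SimpleGraph.mem_neighborFinset G v _).mp b'.2
        | inr hind =>
          obtain ⟨s, hsc, hsi⟩ := hind
          refine Or.inr ⟨s.image Subtype.val, ?_, ?_⟩
          · rw [Finset.card_image_of_injective _ Subtype.val_injective, hsc]
          · intro a ha b hb hab
            simp only [Finset.mem_image] at ha hb
            obtain ⟨a', ha', rfl⟩ := ha
            obtain ⟨b', hb', rfl⟩ := hb
            exact hsi a' ha' b' hb' (fun hh => hab (by rw [hh]))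
      | inr hle =>
        have := hR₂ ↥(M : Finset V) inferInstance (G.comap Subtype.val)
          (by rwa [Fintype.card_coe])
        cases this with
        | inl hcl =>
          obtain ⟨s, hs⟩ := hcl
          refine Or.inl ⟨s.image Subtype.val, ?_⟩
          constructor
          · intro a ha b hb hab
            simp only [Finset.coe_image, Set.mem_image, Finset.mem_coe] at ha hb
            obtain ⟨a', ha', rfl⟩ := ha
            obtain ⟨b', hb', rfl⟩ := hb
            exact hs.1 ha' hb' (fun hh => hab (by rw [hh]))
          · rw [Finset.card_image_of_injective _ Subtype.val_injective, hs.2]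
        | inr hind =>
          obtain ⟨s, hsc, hsi⟩ := hind
          have hvM : v ∉ s.image Subtype.val := by
            intro hmem
            simp only [Finset.mem_image] at hmem
            obtain ⟨a', _, ha⟩ := hmem
            have : (a' : V) ∈ M := a'.2
            rw [ha, hM] at this
            simp at this
          refine Or.inr ⟨insert v (s.image Subtype.val), ?_, ?_⟩
          · rw [Finset.card_insert_of_notMem hvM,
              Finset.card_image_of_injective _ Subtype.val_injective, hsc]
          · intro a ha b hb hab
            have hnotadj : ∀ w : V, w ∈ s.image Subtype.val → ¬ G.Adj v w := by
              intro w hw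
              simp only [Finset.mem_image] at hw
              obtain ⟨w', _, rfl⟩ := hw
              have hw2 : (w' : V) ∈ Nᶜ \ {v} := w'.2
              have := Finset.mem_compl.mp (Finset.mem_sdiff.mp hw2).1
              exact fun hadj => this ((SimpleGraph.mem_neighborFinset G v _).mpr hadj)
            rcases Finset.mem_insert.mp ha with rfl | ha'
            · rcases Finset.mem_insert.mp hb with rfl | hb'
              · exact absurd rfl hab
              · exact hnotadj b hb'
            · rcases Finset.mem_insert.mp hb with rfl | hb'
              · intro hadj; exact hnotadj a ha' hadj.symm
              · simp only [Finset.mem_image] at ha' hb'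
                obtain ⟨a', ha'', rfl⟩ := ha'
                obtain ⟨b', hb'', rfl⟩ := hb'
                exact hsi a' ha'' b' hb'' (fun hh => hab (by rw [hh]))

theorem stmt_4 (p q : ℕ) (hp : 1 ≤ p) (hq : 1 ≤ q) :
    ∃ R : ℕ, ∀ (V : Type) (_ : Fintype V) (G : SimpleGraph V),
      R ≤ Fintype.card V →
        (∃ s : Finset V, G.IsNClique p s) ∨
        (∃ s : Finset V, s.card = q ∧ ∀ u ∈ s, ∀ v ∈ s, u ≠ v → ¬ G.Adj u v) :=
  ramsey_aux (p + q) p q le_rfl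
end
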